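/- For every integer k ≥ 0, the expected number of vertices of degree k of the one-step partial duplication G' of G satisfies E[F_k(G')] = F_k(G) + p·(k-1)·F°_{k-1}(G) − p·k·F°_k(G) + Σ_{ℓ ≥ k} F°_ℓ(G) · binom(ℓ, k) · p^k · (1-p)^{ℓ-k}, where F°_j(G) := F_j(G)/n, F_{-1}(G) := 0, and 0^0 := 1. -/

import Mathlib

/-!
Fix the duplicated vertex `v`. The new vertex has degree `|S|`, and `|S|` is binomially
distributed with parameters `d_v` and `p`: this gives the binomial term. An old vertex `w` has
degree `d_w + 1` if `w ∈ S` and `d_w` otherwise, so it can only change its degree if `w ∈ N(v)`,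
and then does so with probability `p`. Averaging over `v`, each `w` is a neighbour of exactly
`d_w` choices of `v`, so the correction to `F_k` is
`(p / n) ∑_w d_w ([d_w + 1 = k] - [d_w = k]) = (p / n) ((k - 1) F_{k-1} - k F_k)`.
-/

open Finset

/-- The graph `G_{v,S}` obtained from `G` by adding one new vertex (`none`) adjacent
exactly to the vertices of `S`. -/
def SimpleGraph.extendVertex {V : Type*} (G : SimpleGraph V) (S : Finset V) :
    SimpleGraph (Option V) where
  Adj x y :=
    match x, y with
    | some u, some w => G.Adj u w
    | some u, none => u ∈ S
    | none, some w => w ∈ S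
    | none, none => False
  symm := by
    constructor
    rintro (_ | u) (_ | w) h
    · exact h
    · exact h
    · exact h
    · exact G.adj_symm h
  loopless := by
    constructor
    rintro (_ | u) h
    · exact h
    · exact G.irrefl h

instance {V : Type*} [DecidableEq V] (G : SimpleGraph V) [DecidableRel G.Adj] (S : Finset V) :
    DecidableRel (G.extendVertex S).Adj := fun x y =>
  match x, y with
  | some u, some w => inferInstanceAs (Decidable (G.Adj u w))
  | some u, none => inferInstanceAs (Decidable (u ∈ S))
  | none, some w => inferInstanceAs (Decidable (w ∈ S))
  | none, none => inferInstanceAs (Decidable False)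

/-- `F_k(G)`: the number of vertices of `G` of degree exactly `k`. -/
def degCount {V : Type*} [Fintype V] (G : SimpleGraph V) [DecidableRel G.Adj] (k : ℕ) : ℕ :=
  (Finset.univ.filter fun v => G.degree v = k).card

namespace Finset

variable {ι R : Type*} [CommRing R] (p : R)

theorem sum_powerset_bernoulli (s : Finset ι) :
    ∑ S ∈ s.powerset, p ^ #S * (1 - p) ^ (#s - #S) = 1 := by
  rw [sum_pow_mul_eq_add_pow, add_sub_cancel, one_pow]

theorem sum_powerset_bernoulli_mul_ite_card (s : Finset ι) (k : ℕ) :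
    ∑ S ∈ s.powerset, p ^ #S * (1 - p) ^ (#s - #S) * (if #S = k then 1 else 0)
      = (#s).choose k * p ^ k * (1 - p) ^ (#s - k) := by
  simp_rw [mul_boole]
  rw [← sum_filter, ← powersetCard_eq_filter, sum_congr rfl fun S hS => by
    rw [(mem_powersetCard.mp hS).2], sum_const, card_powersetCard, nsmul_eq_mul, mul_assoc]

theorem sum_powerset_bernoulli_mul_ite_mem [DecidableEq ι] (s : Finset ι) (w : ι) (a b : R) :
    ∑ S ∈ s.powerset, p ^ #S * (1 - p) ^ (#s - #S) * (if w ∈ S then a else b)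
      = if w ∈ s then p * a + (1 - p) * b else b := by
  split_ifs with hw
  · obtain ⟨t, hwt, rfl⟩ : ∃ t, w ∉ t ∧ insert w t = s :=
      ⟨s.erase w, s.notMem_erase w, insert_erase hw⟩
    have hwT : ∀ T ∈ t.powerset, w ∉ T := fun T hT h => hwt (mem_powerset.mp hT h)
    have hcard : ∀ T ∈ t.powerset, #T ≤ #t := fun T hT => card_le_card (mem_powerset.mp hT)
    rw [sum_powerset_insert hwt, card_insert_of_notMem hwt, add_comm]
    calc _ = p * a * ∑ T ∈ t.powerset, p ^ #T * (1 - p) ^ (#t - #T)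
          + (1 - p) * b * ∑ T ∈ t.powerset, p ^ #T * (1 - p) ^ (#t - #T) := by
          rw [mul_sum, mul_sum]
          congr 1 <;> refine sum_congr rfl fun T hT => ?_
          · rw [card_insert_of_notMem (hwT T hT), if_pos (mem_insert_self w T),
              Nat.add_sub_add_right, pow_succ]
            ring
          · rw [if_neg (hwT T hT), Nat.sub_add_comm (hcard T hT), pow_succ]
            ring
      _ = p * a + (1 - p) * b := by rw [sum_powerset_bernoulli, mul_one, mul_one]
  · calc _ = b * ∑ S ∈ s.powerset, p ^ #S * (1 - p) ^ (#s - #S) := by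
          rw [mul_sum]
          refine sum_congr rfl fun S hS => ?_
          rw [if_neg fun h => hw (mem_powerset.mp hS h), mul_comm]
      _ = b := by rw [sum_powerset_bernoulli, mul_one]

end Finset

namespace SimpleGraph

variable {V : Type*} [Fintype V] (G : SimpleGraph V) [DecidableRel G.Adj]

theorem sum_sum_neighborFinset {M : Type*} [AddCommMonoid M] (f : V → M) :
    ∑ v, ∑ w ∈ G.neighborFinset v, f w = ∑ w, G.degree w • f w := by
  rw [sum_comm' (t' := univ) (s' := fun w => G.neighborFinset w)
    fun v w => by simp [G.adj_comm]]
  simp only [sum_const, card_neighborFinset_eq_degree]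

theorem natCast_degCount {R : Type*} [AddCommMonoidWithOne R] (k : ℕ) :
    (degCount G k : R) = ∑ v, if G.degree v = k then 1 else 0 :=
  natCast_card_filter _ _

theorem tsum_degCount_mul (f : ℕ → ℝ) :
    ∑' ℓ, (degCount G ℓ : ℝ) * f ℓ = ∑ v, f (G.degree v) := by
  rw [sum_comp, tsum_eq_sum (s := univ.image fun v => G.degree v)]
  · exact sum_congr rfl fun ℓ _ => by rw [nsmul_eq_mul, degCount]
  · intro ℓ hℓ
    have hempty : univ.filter (fun v => G.degree v = ℓ) = ∅ :=
      filter_eq_empty_iff.mpr fun v _ h => hℓ (mem_image.mpr ⟨v, mem_univ v, h⟩)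
    rw [degCount, hempty, card_empty, Nat.cast_zero, zero_mul]

theorem sum_degree_mul_ite_degree_eq (k : ℕ) :
    ∑ v, (G.degree v : ℝ) * (if G.degree v = k then 1 else 0) = k * degCount G k := by
  rw [natCast_degCount, mul_sum]
  exact sum_congr rfl fun v _ => by split_ifs with h <;> simp [h]

theorem sum_degree_mul_ite_degree_add_one_eq (k : ℕ) :
    ∑ v, (G.degree v : ℝ) * (if G.degree v + 1 = k then 1 else 0)
      = if k = 0 then 0 else ((k : ℝ) - 1) * degCount G (k - 1) := by
  rcases k with _ | j
  · simp
  · simp only [Nat.add_right_cancel_iff, sum_degree_mul_ite_degree_eq, Nat.add_sub_cancel]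
    push_cast
    ring

variable [DecidableEq V] (S : Finset V)

theorem degree_extendVertex_some (w : V) :
    (G.extendVertex S).degree (some w) = G.degree w + if w ∈ S then 1 else 0 := by
  simp only [← card_neighborFinset_eq_degree, neighborFinset_eq_filter, card_filter,
    Fintype.sum_option]
  exact add_comm _ _

theorem degree_extendVertex_none : (G.extendVertex S).degree none = #S := by
  simp only [← card_neighborFinset_eq_degree, neighborFinset_eq_filter, card_filter,
    Fintype.sum_option]
  rw [if_neg (G.extendVertex S).irrefl, zero_add, ← card_filter]
  exact congrArg card (filter_mem_eq_inter.trans (univ_inter S))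

theorem natCast_degCount_extendVertex (k : ℕ) :
    (degCount (G.extendVertex S) k : ℝ)
      = (if #S = k then 1 else 0)
        + ∑ w, if G.degree w + (if w ∈ S then 1 else 0) = k then 1 else 0 := by
  rw [natCast_degCount, Fintype.sum_option, degree_extendVertex_none]
  simp only [degree_extendVertex_some]

theorem sum_powerset_bernoulli_mul_degCount_extendVertex (p : ℝ) (v : V) (k : ℕ) :
    ∑ S ∈ (G.neighborFinset v).powerset,
        p ^ #S * (1 - p) ^ (G.degree v - #S) * (degCount (G.extendVertex S) k : ℝ)
      = (G.degree v).choose k * p ^ k * (1 - p) ^ (G.degree v - k) + degCount G k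
        + p * ∑ w ∈ G.neighborFinset v,
            ((if G.degree w + 1 = k then 1 else 0) - (if G.degree w = k then 1 else 0)) := by
  have hsplit : ∀ (w : V) (S : Finset V),
      (if G.degree w + (if w ∈ S then 1 else 0) = k then (1 : ℝ) else 0)
        = if w ∈ S then (if G.degree w + 1 = k then 1 else 0)
          else (if G.degree w = k then 1 else 0) := by
    intro w S
    split_ifs <;> simp_all
  have hmix : ∀ w : V, (if w ∈ G.neighborFinset v
        then p * (if G.degree w + 1 = k then (1 : ℝ) else 0)
          + (1 - p) * (if G.degree w = k then 1 else 0)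
        else (if G.degree w = k then 1 else 0))
      = (if G.degree w = k then 1 else 0) + if w ∈ G.neighborFinset v then
          p * ((if G.degree w + 1 = k then 1 else 0) - (if G.degree w = k then 1 else 0))
        else 0 := by
    intro w
    split_ifs <;> ring
  rw [← card_neighborFinset_eq_degree]
  simp_rw [natCast_degCount_extendVertex, mul_add, mul_sum, hsplit]
  rw [sum_add_distrib, sum_comm, sum_powerset_bernoulli_mul_ite_card, add_assoc]
  simp_rw [sum_powerset_bernoulli_mul_ite_mem, hmix]
  rw [sum_add_distrib, ← natCast_degCount, sum_ite_mem, univ_inter]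

end SimpleGraph

theorem stmt_12_general {V : Type*} [Fintype V] [DecidableEq V]
    (G : SimpleGraph V) [DecidableRel G.Adj]
    (hV : 1 ≤ Fintype.card V) (p : ℝ) (k : ℕ) :
    (1 / (Fintype.card V : ℝ)) *
      ∑ v : V, ∑ S ∈ (G.neighborFinset v).powerset,
        p ^ S.card * (1 - p) ^ (G.degree v - S.card) *
          (degCount (G.extendVertex S) k : ℝ)
      = (degCount G k : ℝ)
        + (if k = 0 then 0 else
            p * ((k : ℝ) - 1) * ((degCount G (k - 1) : ℝ) / (Fintype.card V : ℝ)))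
        - p * (k : ℝ) * ((degCount G k : ℝ) / (Fintype.card V : ℝ))
        + ∑' ℓ : ℕ, ((degCount G ℓ : ℝ) / (Fintype.card V : ℝ)) * (ℓ.choose k : ℝ)
            * p ^ k * (1 - p) ^ (ℓ - k) := by
  have hn : (Fintype.card V : ℝ) ≠ 0 := Nat.cast_ne_zero.mpr (by omega)
  have hbinomial : ∑' ℓ : ℕ, ((degCount G ℓ : ℝ) / (Fintype.card V : ℝ)) * (ℓ.choose k : ℝ)
        * p ^ k * (1 - p) ^ (ℓ - k)
      = (∑ v, ((G.degree v).choose k : ℝ) * p ^ k * (1 - p) ^ (G.degree v - k))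
        / Fintype.card V := by
    rw [← G.tsum_degCount_mul fun ℓ => (ℓ.choose k : ℝ) * p ^ k * (1 - p) ^ (ℓ - k),
      ← tsum_div_const]
    exact tsum_congr fun ℓ => by ring
  have hdegreeShift : ∑ w, G.degree w • ((if G.degree w + 1 = k then (1 : ℝ) else 0)
        - (if G.degree w = k then 1 else 0))
      = (if k = 0 then 0 else ((k : ℝ) - 1) * degCount G (k - 1)) - k * degCount G k := by
    simp_rw [nsmul_eq_mul, mul_sub, sum_sub_distrib, G.sum_degree_mul_ite_degree_add_one_eq,
      G.sum_degree_mul_ite_degree_eq]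
  simp_rw [G.sum_powerset_bernoulli_mul_degCount_extendVertex p]
  rw [sum_add_distrib, sum_add_distrib, ← mul_sum, G.sum_sum_neighborFinset, hdegreeShift,
    hbinomial, sum_const, card_univ, nsmul_eq_mul]
  generalize ∑ v, ((G.degree v).choose k : ℝ) * p ^ k * (1 - p) ^ (G.degree v - k) = B
  split_ifs <;> field_simp <;> ring

/-- The expected number of vertices of degree `k` of the one-step partial duplication of `G`
equals `F_k(G) + p(k-1)F°_{k-1}(G) - pkF°_k(G) + Σ_{ℓ ≥ k} F°_ℓ(G) · binom(ℓ,k) p^k (1-p)^{ℓ-k}`,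
where `F°_j(G) = F_j(G)/n` and `F_{-1}(G) := 0`. -/
theorem stmt_12 {V : Type*} [Fintype V] [DecidableEq V]
    (G : SimpleGraph V) [DecidableRel G.Adj]
    (hV : 1 ≤ Fintype.card V) (p : ℝ) (hp0 : 0 ≤ p) (hp1 : p ≤ 1) (k : ℕ) :
    (1 / (Fintype.card V : ℝ)) *
      ∑ v : V, ∑ S ∈ (G.neighborFinset v).powerset,
        p ^ S.card * (1 - p) ^ (G.degree v - S.card) *
          (degCount (G.extendVertex S) k : ℝ)
      = (degCount G k : ℝ)
        + (if k = 0 then 0 else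
            p * ((k : ℝ) - 1) * ((degCount G (k - 1) : ℝ) / (Fintype.card V : ℝ)))
        - p * (k : ℝ) * ((degCount G k : ℝ) / (Fintype.card V : ℝ))
        + ∑' ℓ : ℕ, ((degCount G ℓ : ℝ) / (Fintype.card V : ℝ)) * (ℓ.choose k : ℝ)
            * p ^ k * (1 - p) ^ (ℓ - k) :=
  stmt_12_general G hV p k
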